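/- arXiv:1701.07800 — 3 statements merged into one kernel-verified Lean document; each statement's English description precedes it below -/
import Mathlib

section
/- Let m ≥ 1, let 1 < p_1, …, p_m < ∞ and define p by 1/p = ∑_{i=1}^m 1/p_i. If w_i ∈ A_{p_i} for every 1 ≤ i ≤ m, then the vector of weights w⃗ = (w_1, …, w_m) belongs to A_{p⃗}. -/
open MeasureTheory ENNReal

noncomputable section

/-- A cube in `ℝⁿ` with sides parallel to the coordinate axes. -/
def IsCube {n : ℕ} (Q : Set (Fin n → ℝ)) : Prop :=
  ∃ (c : Fin n → ℝ) (h : ℝ), 0 < h ∧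
    Q = Set.pi Set.univ fun i => Set.Icc (c i) (c i + h)

/-- The average `⨍_Q f dx` of a (nonnegative) function over a set,
computed with the Lebesgue integral, valued in `ℝ≥0∞`. -/
def avgC {n : ℕ} (Q : Set (Fin n → ℝ)) (f : (Fin n → ℝ) → ℝ) : ℝ≥0∞ :=
  (volume Q)⁻¹ * ∫⁻ x in Q, ENNReal.ofReal (f x)

/-- A weight: a nonnegative locally integrable function. -/
def IsWeight {n : ℕ} (w : (Fin n → ℝ) → ℝ) : Prop :=
  (∀ x, 0 ≤ w x) ∧ LocallyIntegrable w volume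

/-- The Muckenhoupt class `A_p` for `1 < p < ∞`:
`sup_Q (⨍_Q w) (⨍_Q w^(1-p'))^(p-1) < ∞` with `p' = p/(p-1)`. -/
def MuckAp {n : ℕ} (p : ℝ) (w : (Fin n → ℝ) → ℝ) : Prop :=
  ∃ C : ℝ≥0∞, C ≠ ⊤ ∧ ∀ Q : Set (Fin n → ℝ), IsCube Q →
    avgC Q w * (avgC Q fun x => w x ^ (1 - p / (p - 1))) ^ (p - 1) ≤ C

/-- `A_∞`: the union of the classes `A_p` over `1 < p < ∞`. -/
def MuckAinfty {n : ℕ} (w : (Fin n → ℝ) → ℝ) : Prop :=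
  ∃ p : ℝ, 1 < p ∧ MuckAp p w

/-- The reverse Hölder class `RH_s` for `1 < s < ∞`:
`sup_Q (⨍_Q w^s)^(1/s) (⨍_Q w)⁻¹ < ∞`. -/
def RevHolder {n : ℕ} (s : ℝ) (w : (Fin n → ℝ) → ℝ) : Prop :=
  ∃ C : ℝ≥0∞, C ≠ ⊤ ∧ ∀ Q : Set (Fin n → ℝ), IsCube Q →
    (avgC Q fun x => w x ^ s) ^ (1 / s) ≤ C * avgC Q w

/-- The multilinear Muckenhoupt class `A_{p⃗}`: with `w = ∏ wᵢ^(p/pᵢ)`,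
`sup_Q (⨍_Q w)^(1/p) ∏ᵢ (⨍_Q wᵢ^(1-pᵢ'))^(1/pᵢ') < ∞`, where `1/pᵢ' = 1 - 1/pᵢ`. -/
def MultiAp {n m : ℕ} (pv : Fin m → ℝ) (p : ℝ)
    (w : Fin m → (Fin n → ℝ) → ℝ) : Prop :=
  ∃ C : ℝ≥0∞, C ≠ ⊤ ∧ ∀ Q : Set (Fin n → ℝ), IsCube Q →
    (avgC Q fun x => ∏ i, w i x ^ (p / pv i)) ^ (1 / p) *
      ∏ i, (avgC Q fun x => w i x ^ (1 - pv i / (pv i - 1))) ^ (1 - 1 / pv i) ≤ C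


lemma rpow_finset_sum' {ι : Type*} (s : Finset ι) (x : ℝ≥0∞) (hx : x ≠ 0) (hx' : x ≠ ⊤)
    (f : ι → ℝ) : x ^ (∑ i ∈ s, f i) = ∏ i ∈ s, x ^ f i := by
  classical
  induction s using Finset.induction with
  | empty => simp
  | insert _ _ hi ih =>
    rw [Finset.sum_insert hi, Finset.prod_insert hi, ENNReal.rpow_add _ _ hx hx', ih]

/-- If `wᵢ ∈ A_{pᵢ}` for every `i`, then `w⃗ = (w₁, …, w_m) ∈ A_{p⃗}`. -/
theorem product_weights_in_multiAp {n m : ℕ} (hm : 1 ≤ m)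
    (pv : Fin m → ℝ) (hpv : ∀ i, 1 < pv i) (p : ℝ) (hp : 1 / p = ∑ i, (pv i)⁻¹)
    (w : Fin m → (Fin n → ℝ) → ℝ) (hw : ∀ i, IsWeight (w i))
    (hA : ∀ i, MuckAp (pv i) (w i)) :
    MultiAp pv p w := by
  choose C hCt hC using hA
  have : Nonempty (Fin m) := Fin.pos_iff_nonempty.mp hm
  have hpv0 : ∀ i, 0 < pv i := fun i => lt_trans one_pos (hpv i)
  have hp_pos : 0 < p := by
    have h1 : 0 < 1 / p := by
      rw [hp]
      exact Finset.sum_pos (fun i _ => inv_pos.mpr (hpv0 i)) Finset.univ_nonempty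
    exact one_div_pos.mp h1
  have hθsum : ∑ i, p / pv i = 1 := by
    have : ∑ i, p / pv i = p * ∑ i, (pv i)⁻¹ := by
      rw [Finset.mul_sum]; exact Finset.sum_congr rfl fun i _ => div_eq_mul_inv p (pv i)
    rw [this, ← hp, mul_one_div, div_self hp_pos.ne']
  have hθ0 : ∀ i, 0 ≤ p / pv i := fun i => (div_pos hp_pos (hpv0 i)).le
  refine ⟨∏ i, C i ^ (1 / pv i), ?_, ?_⟩
  · exact (ENNReal.prod_lt_top fun i _ =>
      (ENNReal.rpow_lt_top_of_nonneg (one_div_pos.mpr (hpv0 i)).le (hCt i))).ne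
  intro Q hQ
  have hv0 : volume Q ≠ 0 ∧ volume Q ≠ ⊤ := by
    obtain ⟨c, h, hh, rfl⟩ := hQ
    rw [volume_pi_pi]
    constructor
    · simp only [Real.volume_Icc, Finset.prod_ne_zero_iff]
      intro i _
      simp [ENNReal.ofReal_eq_zero, hh, not_le]
    · exact (ENNReal.prod_lt_top fun i _ => by
        simp [Real.volume_Icc, ENNReal.ofReal_lt_top]).ne
  obtain ⟨hv0, hvt⟩ := hv0
  set v : ℝ≥0∞ := (volume Q)⁻¹ with hv
  have hv0' : v ≠ 0 := by simp [hv, hvt]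
  have hvt' : v ≠ ⊤ := by simp [hv, hv0]
  -- Hölder step
  have hmeas : ∀ i ∈ Finset.univ, AEMeasurable (fun x => ENNReal.ofReal (w i x))
      (volume.restrict Q) :=
    fun i _ => ENNReal.measurable_ofReal.comp_aemeasurable
      ((hw i).2.aestronglyMeasurable.aemeasurable.restrict)
  have holder : (∫⁻ x in Q, ∏ i, (ENNReal.ofReal (w i x)) ^ (p / pv i)) ≤
      ∏ i, (∫⁻ x in Q, ENNReal.ofReal (w i x)) ^ (p / pv i) :=
    ENNReal.lintegral_prod_norm_pow_le Finset.univ hmeas hθsum (fun i _ => hθ0 i)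
  have hW : avgC Q (fun x => ∏ i, w i x ^ (p / pv i)) ≤
      ∏ i, (avgC Q (w i)) ^ (p / pv i) := by
    have heq : ∀ x, ENNReal.ofReal (∏ i, w i x ^ (p / pv i)) =
        ∏ i, (ENNReal.ofReal (w i x)) ^ (p / pv i) := by
      intro x
      rw [ENNReal.ofReal_prod_of_nonneg (fun i _ =>
        Real.rpow_nonneg ((hw i).1 x) _)]
      exact Finset.prod_congr rfl fun i _ =>
        (ENNReal.ofReal_rpow_of_nonneg ((hw i).1 x) (hθ0 i)).symm
    calc avgC Q (fun x => ∏ i, w i x ^ (p / pv i))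
        = v * ∫⁻ x in Q, ∏ i, (ENNReal.ofReal (w i x)) ^ (p / pv i) := by
          simp only [avgC, hv]; congr 1; exact lintegral_congr fun x => heq x
      _ ≤ v * ∏ i, (∫⁻ x in Q, ENNReal.ofReal (w i x)) ^ (p / pv i) :=
          mul_le_mul_right holder v
      _ = ∏ i, (avgC Q (w i)) ^ (p / pv i) := by
          rw [show v = v ^ (∑ i : Fin m, p / pv i) by rw [hθsum, ENNReal.rpow_one],
            rpow_finset_sum' _ _ hv0' hvt', ← Finset.prod_mul_distrib]
          exact Finset.prod_congr rfl fun i _ => by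
            rw [avgC, ← hv, ENNReal.mul_rpow_of_nonneg _ _ (hθ0 i)]
  -- combine
  have key : (avgC Q fun x => ∏ i, w i x ^ (p / pv i)) ^ (1 / p) ≤
      ∏ i, (avgC Q (w i)) ^ (1 / pv i) := by
    calc (avgC Q fun x => ∏ i, w i x ^ (p / pv i)) ^ (1 / p)
        ≤ (∏ i, (avgC Q (w i)) ^ (p / pv i)) ^ (1 / p) :=
          ENNReal.rpow_le_rpow hW (by positivity)
      _ = ∏ i, (avgC Q (w i)) ^ (1 / pv i) := by
          rw [← ENNReal.prod_rpow_of_nonneg (by positivity)]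
          exact Finset.prod_congr rfl fun i _ => by
            rw [← ENNReal.rpow_mul]
            congr 1
            rw [div_mul_eq_mul_div, mul_one_div, div_self hp_pos.ne']
  calc (avgC Q fun x => ∏ i, w i x ^ (p / pv i)) ^ (1 / p) *
      ∏ i, (avgC Q fun x => w i x ^ (1 - pv i / (pv i - 1))) ^ (1 - 1 / pv i)
      ≤ (∏ i, (avgC Q (w i)) ^ (1 / pv i)) *
        ∏ i, (avgC Q fun x => w i x ^ (1 - pv i / (pv i - 1))) ^ (1 - 1 / pv i) :=
        mul_le_mul_left key _
    _ = ∏ i, (avgC Q (w i)) ^ (1 / pv i) *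
        (avgC Q fun x => w i x ^ (1 - pv i / (pv i - 1))) ^ (1 - 1 / pv i) :=
        (Finset.prod_mul_distrib).symm
    _ ≤ ∏ i, C i ^ (1 / pv i) := by
        refine Finset.prod_le_prod' fun i _ => ?_
        have h1 : (1 : ℝ) - 1 / pv i = (pv i - 1) * (1 / pv i) := by
          rw [mul_one_div, sub_div, div_self (hpv0 i).ne']
        rw [h1, ENNReal.rpow_mul, ← ENNReal.mul_rpow_of_nonneg _ _
          (one_div_pos.mpr (hpv0 i)).le]
        exact ENNReal.rpow_le_rpow (hC i Q hQ) (one_div_pos.mpr (hpv0 i)).le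
end
end

section
/- Let 0 < a < 1 and b > 0, and define the weight v on ℝ by v(x) = 1/(|x|^a (log(e/|x|))^b) for |x| ≤ 1 and v(x) = 1 for |x| > 1. Then v ∈ A_1, i.e., there is a constant C such that ⨍_I v dx ≤ C ess inf_{x ∈ I} v(x) for every interval I ⊂ ℝ. -/
/-!
Write `v x = φ |x|`. Two properties of the profile `φ` suffice. First, `t ↦ t ^ a * φ t`, which
is `(1 - log t) ^ (-b)` on `(0, 1]` and `t ^ a` beyond, is nondecreasing, so
`φ s ≤ (t / s) ^ a * φ t` for `s ≤ t`. Second, `φ` is quasi-decreasing: `φ t ≤ K * φ s` for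
`s ≤ t`, with `K = (1 + b / a) ^ b`, because a power of a logarithm is dominated by any power:
`(1 + s) ^ b ≤ K * exp (a * s)`.

Let `I = [c, c + h]` and `M = max |c| |c + h|`. Quasi-monotonicity gives `essinf_I v ≥ φ M / K`.
If `M ≤ 2h`, the first property bounds `∫_I v` by `∫_{-M}^{M} M ^ a φ M |x| ^ (-a) dx`,
which is `2 / (1 - a) * M * φ M ≤ 4 / (1 - a) * h * φ M`. If `M > 2h`, then `|x| ≥ M / 2`
on `I`, so `v ≤ 2 ^ a * φ M` there.
-/

open MeasureTheory ENNReal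

noncomputable section

/-- A (nondegenerate, compact) interval in `ℝ`. -/
def IsIntervalR (I : Set ℝ) : Prop := ∃ (c h : ℝ), 0 < h ∧ I = Set.Icc c (c + h)

/-- The average `⨍_I f dx` of a (nonnegative) function over a set,
computed with the Lebesgue integral, valued in `ℝ≥0∞`. -/
def avgI (I : Set ℝ) (f : ℝ → ℝ) : ℝ≥0∞ :=
  (volume I)⁻¹ * ∫⁻ x in I, ENNReal.ofReal (f x)

/-- The Muckenhoupt class `A_p` on `ℝ` for `1 < p < ∞`. -/
def MuckApI (p : ℝ) (w : ℝ → ℝ) : Prop :=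
  ∃ C : ℝ≥0∞, C ≠ ⊤ ∧ ∀ I : Set ℝ, IsIntervalR I →
    avgI I w * (avgI I fun x => w x ^ (1 - p / (p - 1))) ^ (p - 1) ≤ C

/-- The reverse Hölder class `RH_s` on `ℝ` for `1 < s < ∞`. -/
def RevHolderI (s : ℝ) (w : ℝ → ℝ) : Prop :=
  ∃ C : ℝ≥0∞, C ≠ ⊤ ∧ ∀ I : Set ℝ, IsIntervalR I →
    (avgI I fun x => w x ^ s) ^ (1 / s) ≤ C * avgI I w

open Set

def IsA1 (w : ℝ → ℝ) : Prop :=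
  ∃ C : ℝ≥0∞, C ≠ ⊤ ∧ ∀ I : Set ℝ, IsIntervalR I →
    avgI I w ≤ C * essInf (fun x => ENNReal.ofReal (w x)) (volume.restrict I)

lemma max_abs_le_abs_add {c h x : ℝ} (hx : x ∈ Icc c (c + h)) :
    max |c| |c + h| ≤ |x| + h := by
  obtain ⟨hcx, hxc⟩ := hx
  refine max_le ?_ ?_ <;> cases abs_cases c <;> cases abs_cases (c + h) <;> cases abs_cases x <;>
    linarith

lemma max_abs_pos_of_pos {c h : ℝ} (hh : 0 < h) : 0 < max |c| |c + h| := by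
  have hsub : |c + h - c| ≤ |c + h| + |c| := abs_sub _ _
  rw [add_sub_cancel_left, abs_of_pos hh] at hsub
  linarith [le_max_left |c| |c + h|, le_max_right |c| |c + h|]

lemma lintegral_Icc_neg_self_comp_abs_le (F : ℝ → ℝ≥0∞) (m : ℝ) :
    ∫⁻ x in Icc (-m) m, F |x| ≤ 2 * ∫⁻ x in Ioc 0 m, F x := by
  have hpos : ∫⁻ x in Icc 0 m, F |x| = ∫⁻ x in Ioc 0 m, F x := by
    rw [Measure.restrict_congr_set Ioc_ae_eq_Icc.symm]
    exact setLIntegral_congr_fun measurableSet_Ioc fun x hx => by rw [abs_of_pos hx.1]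
  have hneg : ∫⁻ x in Icc (-m) 0, F |x| = ∫⁻ x in Icc 0 m, F |x| := by
    have := (Measure.measurePreserving_neg (volume : Measure ℝ)).setLIntegral_comp_preimage_emb
      (Homeomorph.neg ℝ).measurableEmbedding (fun x => F |x|) (Icc 0 m)
    simpa only [neg_preimage, neg_Icc, neg_zero, abs_neg] using this
  calc ∫⁻ x in Icc (-m) m, F |x| ≤ ∫⁻ x in Icc (-m) 0 ∪ Icc 0 m, F |x| :=
        lintegral_mono_set Icc_subset_Icc_union_Icc
    _ ≤ (∫⁻ x in Icc (-m) 0, F |x|) + ∫⁻ x in Icc 0 m, F |x| := lintegral_union_le _ _ _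
    _ = 2 * ∫⁻ x in Ioc 0 m, F x := by rw [hneg, hpos, two_mul]

lemma lintegral_Ioc_rpow_neg {a : ℝ} (ha : a < 1) {m : ℝ} (hm : 0 ≤ m) :
    ∫⁻ x in Ioc 0 m, ENNReal.ofReal (x ^ (-a)) = ENNReal.ofReal (m ^ (1 - a) / (1 - a)) := by
  have hint : IntegrableOn (fun x : ℝ => x ^ (-a)) (Ioc 0 m) :=
    (intervalIntegrable_iff_integrableOn_Ioc_of_le hm).1
      (intervalIntegral.intervalIntegrable_rpow' (by linarith))
  rw [← ofReal_integral_eq_lintegral_ofReal hint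
    ((ae_restrict_iff' measurableSet_Ioc).2 (ae_of_all _ fun x hx => Real.rpow_nonneg hx.1.le _)),
    ← intervalIntegral.integral_of_le hm, integral_rpow (Or.inl (by linarith)),
    Real.zero_rpow (by linarith), sub_zero, neg_add_eq_sub]

section RadialWeight

variable {φ : ℝ → ℝ} {a : ℝ}

lemma le_mul_rpow_neg_of_monotoneOn (hψ : MonotoneOn (fun t => t ^ a * φ t) (Ioi 0))
    {s t : ℝ} (hs : 0 < s) (hst : s ≤ t) : φ s ≤ t ^ a * φ t * s ^ (-a) := by
  have hmono : s ^ a * φ s ≤ t ^ a * φ t := hψ hs (hs.trans_le hst) hst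
  calc φ s = s ^ a * φ s * s ^ (-a) := by
        rw [mul_right_comm, ← Real.rpow_add hs, add_neg_cancel, Real.rpow_zero, one_mul]
    _ ≤ t ^ a * φ t * s ^ (-a) := by gcongr

lemma le_two_rpow_mul_of_monotoneOn (ha : 0 ≤ a) (hφ : ∀ t, 0 < t → 0 ≤ φ t)
    (hψ : MonotoneOn (fun t => t ^ a * φ t) (Ioi 0)) {s t : ℝ} (hs : 0 < s) (hst : s ≤ t)
    (hts : t ≤ 2 * s) : φ s ≤ 2 ^ a * φ t := by
  have ht : 0 ≤ t := hs.le.trans hst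
  have hφt := hφ t (hs.trans_le hst)
  calc φ s ≤ t ^ a * φ t * s ^ (-a) := le_mul_rpow_neg_of_monotoneOn hψ hs hst
    _ ≤ (2 * s) ^ a * φ t * s ^ (-a) := by gcongr
    _ = 2 ^ a * φ t := by
        rw [Real.mul_rpow zero_le_two hs.le, mul_right_comm, mul_assoc _ (s ^ a),
          ← Real.rpow_add hs, add_neg_cancel, Real.rpow_zero, mul_one]

lemma lintegral_Icc_neg_self_le (ha : a < 1) (hφ : ∀ t, 0 < t → 0 ≤ φ t)
    (hψ : MonotoneOn (fun t => t ^ a * φ t) (Ioi 0)) {r : ℝ} (hr : 0 < r) :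
    ∫⁻ x in Icc (-r) r, ENNReal.ofReal (φ |x|) ≤
      ENNReal.ofReal (2 / (1 - a) * r * φ r) := by
  have hψr : 0 ≤ r ^ a * φ r := mul_nonneg (Real.rpow_nonneg hr.le _) (hφ r hr)
  calc ∫⁻ x in Icc (-r) r, ENNReal.ofReal (φ |x|)
      ≤ 2 * ∫⁻ x in Ioc 0 r, ENNReal.ofReal (φ x) :=
        lintegral_Icc_neg_self_comp_abs_le (fun t => ENNReal.ofReal (φ t)) r
    _ ≤ 2 * ∫⁻ x in Ioc 0 r, ENNReal.ofReal (r ^ a * φ r) * ENNReal.ofReal (x ^ (-a)) := by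
        gcongr 2 * ?_
        refine setLIntegral_mono' measurableSet_Ioc fun x hx => ?_
        rw [← ENNReal.ofReal_mul hψr]
        exact ENNReal.ofReal_le_ofReal (le_mul_rpow_neg_of_monotoneOn hψ hx.1 hx.2)
    _ = 2 * (ENNReal.ofReal (r ^ a * φ r) * ENNReal.ofReal (r ^ (1 - a) / (1 - a))) := by
        rw [lintegral_const_mul' _ _ ENNReal.ofReal_ne_top, lintegral_Ioc_rpow_neg ha hr.le]
    _ = ENNReal.ofReal (2 / (1 - a) * r * φ r) := by
        rw [← ENNReal.ofReal_mul hψr, ← ENNReal.ofReal_ofNat 2,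
          ← ENNReal.ofReal_mul zero_le_two]
        congr 1
        have hr1 : r ^ a * r ^ (1 - a) = r := by
          rw [← Real.rpow_add hr, add_sub_cancel, Real.rpow_one]
        linear_combination (2 / (1 - a) * φ r) * hr1

lemma lintegral_Icc_add_le (ha0 : 0 ≤ a) (ha1 : a < 1) (hφ : ∀ t, 0 < t → 0 ≤ φ t)
    (hψ : MonotoneOn (fun t => t ^ a * φ t) (Ioi 0)) {c h : ℝ} (hh : 0 < h) :
    ∫⁻ x in Icc c (c + h), ENNReal.ofReal (φ |x|) ≤
      ENNReal.ofReal ((4 / (1 - a) + 2 ^ a) * h * φ (max |c| |c + h|)) := by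
  set M := max |c| |c + h|
  have hM : 0 < M := max_abs_pos_of_pos hh
  have hφM : 0 ≤ φ M := hφ M hM
  have h2a : 0 ≤ (2 : ℝ) ^ a := by positivity
  have h4a : 0 ≤ 4 / (1 - a) := div_nonneg zero_le_four (by linarith)
  by_cases hnear : M ≤ 2 * h
  · calc ∫⁻ x in Icc c (c + h), ENNReal.ofReal (φ |x|)
        ≤ ∫⁻ x in Icc (-M) M, ENNReal.ofReal (φ |x|) :=
          lintegral_mono_set fun x hx => abs_le.1 (abs_le_max_abs_abs hx.1 hx.2)
      _ ≤ ENNReal.ofReal (2 / (1 - a) * M * φ M) := lintegral_Icc_neg_self_le ha1 hφ hψ hM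
      _ ≤ ENNReal.ofReal ((4 / (1 - a) + 2 ^ a) * h * φ M) := by
          gcongr ENNReal.ofReal (?_ * φ M)
          calc 2 / (1 - a) * M ≤ 2 / (1 - a) * (2 * h) := by gcongr
            _ = 4 / (1 - a) * h := by ring
            _ ≤ (4 / (1 - a) + 2 ^ a) * h := by
                gcongr
                exact le_add_of_nonneg_right h2a
  · have hfar : ∀ x ∈ Icc c (c + h), φ |x| ≤ 2 ^ a * φ M := fun x hx =>
      le_two_rpow_mul_of_monotoneOn ha0 hφ hψ (by linarith [max_abs_le_abs_add hx])
        (abs_le_max_abs_abs hx.1 hx.2) (by linarith [max_abs_le_abs_add hx])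
    calc ∫⁻ x in Icc c (c + h), ENNReal.ofReal (φ |x|)
        ≤ ∫⁻ x in Icc c (c + h), ENNReal.ofReal (2 ^ a * φ M) :=
          setLIntegral_mono' measurableSet_Icc fun x hx => ENNReal.ofReal_le_ofReal (hfar x hx)
      _ = ENNReal.ofReal (2 ^ a * φ M * h) := by
          rw [setLIntegral_const, Real.volume_Icc, add_sub_cancel_left,
            ← ENNReal.ofReal_mul (mul_nonneg h2a hφM)]
      _ ≤ ENNReal.ofReal ((4 / (1 - a) + 2 ^ a) * h * φ M) := by
          rw [mul_right_comm]
          gcongr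
          exact le_add_of_nonneg_left h4a

lemma ofReal_div_le_essInf {K M : ℝ} (hK0 : 0 < K)
    (hK : ∀ s t, 0 < s → s ≤ t → φ t ≤ K * φ s) {S : Set ℝ} (hS : MeasurableSet S)
    (hSM : ∀ x ∈ S, |x| ≤ M) :
    ENNReal.ofReal (φ M / K) ≤
      essInf (fun x => ENNReal.ofReal (φ |x|)) (volume.restrict S) := by
  refine le_essInf_of_ae_le _ ?_
  filter_upwards [ae_restrict_mem hS, ae_restrict_of_ae (volume.ae_ne 0)] with x hxS hx0
  exact ENNReal.ofReal_le_ofReal <|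
    (div_le_iff₀' hK0).2 (hK |x| M (abs_pos.2 hx0) (hSM x hxS))

theorem isA1_comp_abs {K : ℝ} (ha0 : 0 ≤ a) (ha1 : a < 1) (hφ : ∀ t, 0 < t → 0 ≤ φ t)
    (hψ : MonotoneOn (fun t => t ^ a * φ t) (Ioi 0)) (hK0 : 0 < K)
    (hK : ∀ s t, 0 < s → s ≤ t → φ t ≤ K * φ s) :
    IsA1 fun x => φ |x| := by
  set C := 4 / (1 - a) + 2 ^ a
  refine ⟨ENNReal.ofReal (C * K), ENNReal.ofReal_ne_top, ?_⟩
  rintro _ ⟨c, h, hh, rfl⟩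
  set M := max |c| |c + h|
  have hvol : volume (Icc c (c + h)) = ENNReal.ofReal h := by
    rw [Real.volume_Icc, add_sub_cancel_left]
  calc avgI (Icc c (c + h)) (fun x => φ |x|)
      ≤ (ENNReal.ofReal h)⁻¹ * ENNReal.ofReal (C * h * φ M) := by
        rw [avgI, hvol]
        gcongr
        exact lintegral_Icc_add_le ha0 ha1 hφ hψ hh
    _ = ENNReal.ofReal (C * K) * ENNReal.ofReal (φ M / K) := by
        rw [← ENNReal.ofReal_inv_of_pos hh, ← ENNReal.ofReal_mul (inv_nonneg.2 hh.le),
          ← ENNReal.ofReal_mul' (div_nonneg (hφ M (max_abs_pos_of_pos hh)) hK0.le)]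
        congr 1
        field_simp
    _ ≤ _ := by
        gcongr
        exact ofReal_div_le_essInf hK0 hK measurableSet_Icc fun x hx => abs_le_max_abs_abs hx.1 hx.2

end RadialWeight

lemma one_add_le_mul_exp {s t : ℝ} (hs : 0 ≤ s) (ht : 0 < t) :
    1 + s ≤ (1 + t⁻¹) * Real.exp (t * s) :=
  calc 1 + s ≤ (1 + t⁻¹) * (t * s + 1) := by
        have : t⁻¹ * (t * s) = s := by field_simp
        nlinarith [mul_nonneg ht.le hs, inv_pos.2 ht]
    _ ≤ (1 + t⁻¹) * Real.exp (t * s) := by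
        gcongr
        exact Real.add_one_le_exp _

lemma one_le_one_sub_log {x : ℝ} (hx : 0 < x) (hx1 : x ≤ 1) : 1 ≤ 1 - Real.log x := by
  linarith [Real.log_nonpos hx.le hx1]

lemma rpow_mul_one_sub_log_rpow_le {a b x M : ℝ} (ha : 0 < a) (hb : 0 < b) (hx : 0 < x)
    (hxM : x ≤ M) (hM : M ≤ 1) :
    x ^ a * (1 - Real.log x) ^ b ≤ (1 + b / a) ^ b * (M ^ a * (1 - Real.log M) ^ b) := by
  have hM0 : 0 < M := hx.trans_le hxM
  set s := Real.log M - Real.log x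
  have hs : 0 ≤ s := sub_nonneg.2 (Real.log_le_log hx hxM)
  have hlogM := one_le_one_sub_log hM0 hM
  have hlog : 1 - Real.log x ≤ (1 - Real.log M) * ((1 + b / a) * Real.exp (a / b * s)) :=
    calc 1 - Real.log x = (1 - Real.log M) + s := by ring
      _ ≤ (1 - Real.log M) * (1 + s) := by nlinarith
      _ ≤ (1 - Real.log M) * ((1 + b / a) * Real.exp (a / b * s)) := by
          gcongr
          simpa only [inv_div] using one_add_le_mul_exp hs (div_pos ha hb)
  have hexp : Real.exp (a / b * s) ^ b = Real.exp (a * s) := by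
    rw [← Real.exp_mul]
    field_simp
  have hshift : x ^ a * Real.exp (a * s) = M ^ a := by
    rw [Real.rpow_def_of_pos hx, Real.rpow_def_of_pos hM0, ← Real.exp_add]
    congr 1
    ring
  calc x ^ a * (1 - Real.log x) ^ b
      ≤ x ^ a * ((1 - Real.log M) * ((1 + b / a) * Real.exp (a / b * s))) ^ b := by
        gcongr
        linarith [one_le_one_sub_log hx (hxM.trans hM)]
    _ = (1 + b / a) ^ b * (M ^ a * (1 - Real.log M) ^ b) := by
        rw [Real.mul_rpow (by linarith) (by positivity), Real.mul_rpow (by positivity)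
          (by positivity), hexp, ← hshift]
        ring

def logPowerProfile (a b t : ℝ) : ℝ :=
  if t ≤ 1 then 1 / (t ^ a * Real.log (Real.exp 1 / t) ^ b) else 1

section LogPowerProfile

variable {a b : ℝ}

lemma logPowerProfile_eq_inv {t : ℝ} (ht : 0 < t) :
    logPowerProfile a b t = (min t 1 ^ a * (1 - Real.log (min t 1)) ^ b)⁻¹ := by
  unfold logPowerProfile
  split_ifs with ht1
  · rw [min_eq_left ht1, Real.log_div (Real.exp_ne_zero 1) ht.ne', Real.log_exp, one_div]
  · simp [min_eq_right (le_of_not_ge ht1)]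

lemma rpow_mul_logPowerProfile {t : ℝ} (ht : 0 < t) :
    t ^ a * logPowerProfile a b t = max t 1 ^ a * ((1 - Real.log (min t 1)) ^ b)⁻¹ := by
  have hmin : 0 < min t 1 := lt_min ht one_pos
  have hsplit : t ^ a = min t 1 ^ a * max t 1 ^ a := by
    rw [← Real.mul_rpow hmin.le (by positivity), min_mul_max, mul_one]
  have : 0 < min t 1 ^ a := by positivity
  rw [logPowerProfile_eq_inv ht, hsplit]
  field_simp

lemma logPowerProfile_nonneg {t : ℝ} (ht : 0 < t) : 0 ≤ logPowerProfile a b t := by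
  have hmin : 0 < min t 1 := lt_min ht one_pos
  have := one_le_one_sub_log hmin (min_le_right t 1)
  rw [logPowerProfile_eq_inv ht]
  positivity

lemma monotoneOn_rpow_mul_logPowerProfile (ha : 0 ≤ a) (hb : 0 ≤ b) :
    MonotoneOn (fun t => t ^ a * logPowerProfile a b t) (Ioi 0) := by
  intro s hs t ht hst
  have hs1 : 0 < min s 1 := lt_min hs one_pos
  have := one_le_one_sub_log hs1 (min_le_right s 1)
  have := one_le_one_sub_log (lt_min ht one_pos) (min_le_right t 1)
  simp only [rpow_mul_logPowerProfile hs, rpow_mul_logPowerProfile ht]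
  gcongr

lemma logPowerProfile_le_mul (ha : 0 < a) (hb : 0 < b) {s t : ℝ} (hs : 0 < s) (hst : s ≤ t) :
    logPowerProfile a b t ≤ (1 + b / a) ^ b * logPowerProfile a b s := by
  have hs1 : 0 < min s 1 := lt_min hs one_pos
  have ht1 : 0 < min t 1 := lt_min (hs.trans_le hst) one_pos
  have := one_le_one_sub_log hs1 (min_le_right s 1)
  have := one_le_one_sub_log ht1 (min_le_right t 1)
  rw [logPowerProfile_eq_inv (hs.trans_le hst), logPowerProfile_eq_inv hs, ← div_eq_mul_inv,
    le_div_iff₀ (by positivity), inv_mul_le_iff₀ (by positivity)]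
  exact (rpow_mul_one_sub_log_rpow_le ha hb hs1 (min_le_min_right 1 hst)
    (min_le_right t 1)).trans_eq (mul_comm _ _)

end LogPowerProfile

/-- The weight `v(x) = 1/(|x|^a (log(e/|x|))^b)` on `[-1,1]`, extended by `1`, belongs
to `A₁`: `⨍_I v ≤ C essinf_I v` for every interval `I`. -/
theorem log_power_weight_in_A1 (a b : ℝ) (ha0 : 0 < a) (ha1 : a < 1) (hb : 0 < b)
    (v : ℝ → ℝ)
    (hv : ∀ x, v x = if |x| ≤ 1 then
      1 / (|x| ^ a * Real.log (Real.exp 1 / |x|) ^ b) else 1) :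
    ∃ C : ℝ≥0∞, C ≠ ⊤ ∧ ∀ I : Set ℝ, IsIntervalR I →
      avgI I v ≤ C * essInf (fun x => ENNReal.ofReal (v x)) (volume.restrict I) := by
  obtain rfl : v = fun x => logPowerProfile a b |x| := funext hv
  exact isA1_comp_abs ha0.le ha1 (fun _ => logPowerProfile_nonneg)
    (monotoneOn_rpow_mul_logPowerProfile ha0.le hb.le) (by positivity)
    (fun _ _ => logPowerProfile_le_mul ha0 hb)
end
end

section
/- Let 1 < p_1 < ∞ and p_1' = p_1/(p_1 − 1). Define the weight w_1 on ℝ by w_1(x) = 1/(|x| (log(e/|x|))^2) for |x| ≤ 1 and w_1(x) = 1 for |x| > 1. Then the weight σ_1 = w_1^{1−p_1'} belongs to A_{2p_1'}. -/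
open MeasureTheory ENNReal

noncomputable section

/-!
Write `w₁ = 1 / m(|x|)`, where `m(t) = t log(e/t)²` on `(0, 1]` and `m = 1` beyond
(`LogWeight.denom`). Then `σ₁ = m(|x|)^β` with `β = p₁' - 1`, and the dual weight of
`A_{2p₁'}` is `m(|x|)^{-α}` with `α = β / (2β + 1) < 1`. The profile `m` is bounded by `3/2`,
submultiplicative on `(0, 1]` and hence almost increasing, and `m(t)/t` is decreasing. On an
interval of length `h` whose points satisfy `a ≤ |x| ≤ 2a`, `m(|x|)` is comparable to `m(a)`.
Every other interval lies in `[-2h, 2h]`, where `m ≤ 3/2 m(2h)`, and the decrease of `m(t)/t`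
gives `∫₀^{2h} m^{-α} ≤ 2h m(2h)^{-α} / (1 - α)`. In both cases one level `M` controls both
`sup_I σ₁` and `⨍_I m^{-α}`, so the `A_{2p₁'}` product is bounded.
-/

open Real Set

theorem IsIntervalR.measurableSet {I : Set ℝ} (hI : IsIntervalR I) : MeasurableSet I := by
  obtain ⟨c, h, -, rfl⟩ := hI
  exact measurableSet_Icc

theorem avgI_le_of_lintegral_le {I : Set ℝ} {f : ℝ → ℝ} {K : ℝ≥0∞} (hI : IsIntervalR I)
    (hf : ∫⁻ x in I, ENNReal.ofReal (f x) ≤ K * volume I) : avgI I f ≤ K := by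
  obtain ⟨c, h, hh, rfl⟩ := hI
  rw [avgI, ENNReal.inv_mul_le_iff (by simp [hh]) (by simp), mul_comm]
  exact hf

theorem avgI_le_of_forall_le {I : Set ℝ} {f : ℝ → ℝ} {K : ℝ} (hI : IsIntervalR I)
    (hf : ∀ x ∈ I, f x ≤ K) : avgI I f ≤ ENNReal.ofReal K := by
  refine avgI_le_of_lintegral_le hI ?_
  calc ∫⁻ x in I, ENNReal.ofReal (f x) ≤ ∫⁻ _ in I, ENNReal.ofReal K :=
        setLIntegral_mono' hI.measurableSet fun x hx => ENNReal.ofReal_le_ofReal (hf x hx)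
    _ = ENNReal.ofReal K * volume I := setLIntegral_const _ _

theorem lintegral_Ioc_rpow_neg_s11 {α s : ℝ} (hα : α < 1) (hs : 0 ≤ s) :
    ∫⁻ t in Ioc 0 s, ENNReal.ofReal (t ^ (-α)) = ENNReal.ofReal (s * s ^ (-α) / (1 - α)) := by
  have hα' : -1 < -α := by linarith
  rw [← ofReal_integral_eq_lintegral_ofReal, ← intervalIntegral.integral_of_le hs,
    integral_rpow (Or.inl hα'), zero_rpow (by linarith), sub_zero, neg_add_eq_sub]
  · rw [sub_eq_add_neg, rpow_add' hs (by linarith), Real.rpow_one]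
  · exact (intervalIntegrable_iff_integrableOn_Ioc_of_le hs).mp
      (intervalIntegral.intervalIntegrable_rpow' hα')
  · filter_upwards [ae_restrict_mem measurableSet_Ioc] with t ht
    exact rpow_nonneg ht.1.le _

theorem lintegral_Ioc_rpow_neg_le_of_div_le {m : ℝ → ℝ} {α s : ℝ} (hα0 : 0 ≤ α) (hα1 : α < 1)
    (hs : 0 < s) (hms : 0 < m s) (hm : ∀ t ∈ Ioc 0 s, m s / s ≤ m t / t) :
    ∫⁻ t in Ioc 0 s, ENNReal.ofReal (m t ^ (-α)) ≤ ENNReal.ofReal (s * m s ^ (-α) / (1 - α)) := by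
  set k := m s / s
  have hk : 0 < k := div_pos hms hs
  have hpt : ∀ t ∈ Ioc 0 s, ENNReal.ofReal (m t ^ (-α)) ≤
      ENNReal.ofReal (k ^ (-α)) * ENNReal.ofReal (t ^ (-α)) := by
    intro t ht
    have hkt : k * t ≤ m t := (le_div_iff₀ ht.1).mp (hm t ht)
    rw [← ENNReal.ofReal_mul (by positivity), ← mul_rpow hk.le ht.1.le]
    exact ENNReal.ofReal_le_ofReal (rpow_le_rpow_of_nonpos (by have := ht.1; positivity) hkt
      (by linarith))
  calc ∫⁻ t in Ioc 0 s, ENNReal.ofReal (m t ^ (-α))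
      ≤ ∫⁻ t in Ioc 0 s, ENNReal.ofReal (k ^ (-α)) * ENNReal.ofReal (t ^ (-α)) :=
        setLIntegral_mono' measurableSet_Ioc hpt
    _ = ENNReal.ofReal (k ^ (-α) * (s * s ^ (-α) / (1 - α))) := by
        rw [lintegral_const_mul' _ _ ENNReal.ofReal_ne_top, lintegral_Ioc_rpow_neg_s11 hα1 hs.le,
          ← ENNReal.ofReal_mul (by positivity)]
    _ = ENNReal.ofReal (s * m s ^ (-α) / (1 - α)) := by
        rw [div_rpow hms.le hs.le]
        have : 0 < s ^ (-α) := rpow_pos_of_pos hs _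
        field_simp

theorem lintegral_Icc_comp_abs_le (g : ℝ → ℝ≥0∞) (s : ℝ) :
    ∫⁻ x in Icc (-s) s, g |x| ≤ 2 * ∫⁻ x in Ioc 0 s, g x := by
  have hpos : ∫⁻ x in Ioc 0 s, g |x| = ∫⁻ x in Ioc 0 s, g x :=
    setLIntegral_congr_fun measurableSet_Ioc fun x hx => by rw [abs_of_pos hx.1]
  have hneg : ∫⁻ x in Ico (-s) 0, g |x| = ∫⁻ x in Ioc 0 s, g |x| := by
    have hpre : Ico (-s) 0 = Neg.neg ⁻¹' Ioc 0 s := by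
      ext x
      simp
    rw [hpre]
    simpa [abs_neg] using
      (Measure.measurePreserving_neg (volume : Measure ℝ)).setLIntegral_comp_preimage_emb
        (Homeomorph.neg ℝ).measurableEmbedding (fun x => g |x|) (Ioc 0 s)
  calc ∫⁻ x in Icc (-s) s, g |x| ≤ ∫⁻ x in Ico (-s) 0 ∪ Icc 0 s, g |x| :=
        lintegral_mono_set fun x hx => (lt_or_ge x 0).imp (fun h => ⟨hx.1, h⟩) fun h => ⟨h, hx.2⟩
    _ ≤ (∫⁻ x in Ico (-s) 0, g |x|) + ∫⁻ x in Icc 0 s, g |x| := lintegral_union_le _ _ _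
    _ = 2 * ∫⁻ x in Ioc 0 s, g x := by
        rw [hneg, setLIntegral_congr Ioc_ae_eq_Icc.symm, hpos, two_mul]

theorem muckApI_rpow_of_exists_level {u : ℝ → ℝ} {α β A K : ℝ} (hu : ∀ x, 0 ≤ u x)
    (hα : 0 < α) (hβ : 0 < β) (hA : 0 ≤ A) (hK : 0 ≤ K)
    (hlevel : ∀ I, IsIntervalR I → ∃ M > 0, (∀ x ∈ I, u x ≤ A * M) ∧
      avgI I (fun x => u x ^ (-α)) ≤ ENNReal.ofReal (K * M ^ (-α))) :
    MuckApI (1 + β / α) (fun x => u x ^ β) := by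
  have hdual : (fun x => (u x ^ β) ^ (1 - (1 + β / α) / (1 + β / α - 1))) =
      fun x => u x ^ (-α) := by
    funext x
    rw [← rpow_mul (hu x)]
    congr 1
    rw [add_sub_cancel_left]
    field_simp
    ring
  refine ⟨ENNReal.ofReal (A ^ β * K ^ (β / α)), ENNReal.ofReal_ne_top, fun I hI => ?_⟩
  obtain ⟨M, hM, hup, havg⟩ := hlevel I hI
  have havg_u : avgI I (fun x => u x ^ β) ≤ ENNReal.ofReal ((A * M) ^ β) :=
    avgI_le_of_forall_le hI fun x hx => rpow_le_rpow (hu x) (hup x hx) hβ.le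
  rw [hdual, add_sub_cancel_left]
  calc avgI I (fun x => u x ^ β) * avgI I (fun x => u x ^ (-α)) ^ (β / α)
      ≤ ENNReal.ofReal ((A * M) ^ β) * ENNReal.ofReal (K * M ^ (-α)) ^ (β / α) :=
        mul_le_mul' havg_u (ENNReal.rpow_le_rpow havg (by positivity))
    _ = ENNReal.ofReal (A ^ β * K ^ (β / α)) := by
        rw [ENNReal.ofReal_rpow_of_nonneg (by positivity) (by positivity),
          ← ENNReal.ofReal_mul (by positivity)]
        congr 1
        rw [mul_rpow hA hM.le, mul_rpow hK (by positivity), ← rpow_mul hM.le,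
          neg_mul, mul_div_cancel₀ _ hα.ne', rpow_neg hM.le]
        field_simp

namespace LogWeight

def denom (t : ℝ) : ℝ := if t ≤ 1 then t * log (exp 1 / t) ^ (2 : ℕ) else 1

theorem inv_denom (t : ℝ) :
    (denom t)⁻¹ = if t ≤ 1 then 1 / (t * log (exp 1 / t) ^ (2 : ℕ)) else 1 := by
  unfold denom
  split_ifs <;> simp

theorem denom_zero : denom 0 = 0 := by simp [denom]

theorem one_le_log_exp_div {t : ℝ} (ht : 0 < t) (ht1 : t ≤ 1) : 1 ≤ log (exp 1 / t) := by
  rw [log_div (exp_ne_zero 1) ht.ne', log_exp]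
  linarith [log_nonpos ht.le ht1]

theorem log_exp_div_le_log_exp_div {t s : ℝ} (ht : 0 < t) (hts : t ≤ s) :
    log (exp 1 / s) ≤ log (exp 1 / t) :=
  log_le_log (div_pos (exp_pos 1) (ht.trans_le hts))
    (div_le_div_of_nonneg_left (exp_pos 1).le ht hts)

theorem denom_pos {t : ℝ} (ht : 0 < t) : 0 < denom t := by
  unfold denom
  split_ifs with ht1
  · have := one_le_log_exp_div ht ht1
    positivity
  · exact one_pos

theorem denom_nonneg {t : ℝ} (ht : 0 ≤ t) : 0 ≤ denom t := by
  unfold denom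
  split_ifs <;> positivity

theorem denom_le_three_halves (t : ℝ) : denom t ≤ 3 / 2 := by
  rcases le_or_gt t 0 with ht0 | ht0
  · rw [denom, if_pos (by linarith)]
    nlinarith [sq_nonneg (log (exp 1 / t))]
  unfold denom
  split_ifs with ht1
  · obtain ⟨v, hv⟩ : ∃ v, log (exp 1 / t) = 2 * v := ⟨log (exp 1 / t) / 2, by ring⟩
    have hv0 : 0 ≤ v := by linarith [one_le_log_exp_div ht0 ht1]
    have ht_eq : t = exp (-1) * exp (1 - v) ^ 2 := by
      rw [sq, ← exp_add, ← exp_add,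
        show -1 + ((1 - v) + (1 - v)) = 1 - log (exp 1 / t) by rw [hv]; ring,
        log_div (exp_ne_zero 1) ht0.ne', log_exp, _root_.sub_sub_cancel, exp_log ht0]
    have hve : v * exp (1 - v) ≤ 1 :=
      calc v * exp (1 - v) ≤ exp (v - 1) * exp (1 - v) := by
            gcongr; linarith [add_one_le_exp (v - 1)]
        _ = 1 := by rw [← exp_add]; simp
    have hve2 : (v * exp (1 - v)) ^ 2 ≤ 1 := pow_le_one₀ (by positivity) hve
    calc t * log (exp 1 / t) ^ 2 = 4 * exp (-1) * (v * exp (1 - v)) ^ 2 := by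
          rw [hv, ht_eq]; ring
      _ ≤ 3 / 2 := by nlinarith [exp_neg_one_lt_d9, exp_pos (-1)]
  · norm_num

theorem denom_mul_le {x y : ℝ} (hx : 0 < x) (hx1 : x ≤ 1) (hy : 0 < y) (hy1 : y ≤ 1) :
    denom (x * y) ≤ denom x * denom y := by
  have hL := one_le_log_exp_div hx hx1
  have hK := one_le_log_exp_div hy hy1
  have hxy : log (exp 1 / (x * y)) = log (exp 1 / x) + log (exp 1 / y) - 1 := by
    rw [log_div (exp_ne_zero 1) (by positivity), log_div (exp_ne_zero 1) hx.ne',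
      log_div (exp_ne_zero 1) hy.ne', log_mul hx.ne' hy.ne', log_exp]
    ring
  rw [denom, denom, denom, if_pos (mul_le_one₀ hx1 hy.le hy1), if_pos hx1, if_pos hy1, hxy]
  have h : log (exp 1 / x) + log (exp 1 / y) - 1 ≤ log (exp 1 / x) * log (exp 1 / y) := by
    nlinarith
  have h2 := pow_le_pow_left₀ (by linarith) h 2
  calc x * y * (log (exp 1 / x) + log (exp 1 / y) - 1) ^ 2
      ≤ x * y * (log (exp 1 / x) * log (exp 1 / y)) ^ 2 := by gcongr
    _ = _ := by ring

theorem denom_le_of_le {t s : ℝ} (ht : 0 < t) (hts : t ≤ s) : denom t ≤ 3 / 2 * denom s := by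
  have hs := ht.trans_le hts
  by_cases hs1 : s ≤ 1
  · calc denom t = denom (t / s * s) := by rw [div_mul_cancel₀ _ hs.ne']
      _ ≤ denom (t / s) * denom s :=
        denom_mul_le (div_pos ht hs) ((div_le_one hs).mpr hts) hs hs1
      _ ≤ 3 / 2 * denom s := by gcongr; exacts [denom_nonneg hs.le, denom_le_three_halves _]
  · rw [show denom s = 1 from if_neg hs1, mul_one]
    exact denom_le_three_halves t

theorem denom_div_le_denom_div {t s : ℝ} (ht : 0 < t) (hts : t ≤ s) :
    denom s / s ≤ denom t / t := by
  have hs := ht.trans_le hts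
  unfold denom
  split_ifs with hs1 ht1 ht1
  · rw [mul_div_cancel_left₀ _ hs.ne', mul_div_cancel_left₀ _ ht.ne']
    have := one_le_log_exp_div hs hs1
    have := log_exp_div_le_log_exp_div ht hts
    gcongr
  · exact absurd (hts.trans hs1) ht1
  · rw [mul_div_cancel_left₀ _ ht.ne']
    have := one_le_log_exp_div ht ht1
    calc 1 / s ≤ 1 := (div_le_one hs).mpr (by linarith)
      _ ≤ log (exp 1 / t) ^ 2 := by nlinarith
  · exact one_div_le_one_div_of_le ht hts


theorem exists_level_of_far {I : Set ℝ} {a α : ℝ} (hα0 : 0 ≤ α) (hα1 : α < 1)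
    (hI : IsIntervalR I) (ha : 0 < a) (hIa : ∀ x ∈ I, a ≤ |x| ∧ |x| ≤ 2 * a) :
    ∃ M > 0, (∀ x ∈ I, denom |x| ≤ 2 * M) ∧
      avgI I (fun x => denom |x| ^ (-α)) ≤ ENNReal.ofReal (4 / (1 - α) * M ^ (-α)) := by
  have hMa := denom_pos ha
  refine ⟨denom a, hMa, fun x hx => ?_, avgI_le_of_forall_le hI fun x hx => ?_⟩
  · obtain ⟨hax, hxa⟩ := hIa x hx
    have h := denom_div_le_denom_div ha hax
    rw [div_le_div_iff₀ (ha.trans_le hax) ha] at h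
    nlinarith
  · have hlow : 2 / 3 * denom a ≤ denom |x| := by
      linarith [denom_le_of_le ha (hIa x hx).1]
    have hconst : (2 / 3 : ℝ) ^ (-α) ≤ 4 / (1 - α) :=
      calc (2 / 3 : ℝ) ^ (-α) ≤ (2 / 3) ^ (-1 : ℝ) :=
            rpow_le_rpow_of_exponent_ge (by norm_num) (by norm_num) (by linarith)
        _ ≤ 4 := by norm_num [Real.rpow_neg_one]
        _ ≤ 4 / (1 - α) := le_div_self (by norm_num) (by linarith) (by linarith)
    calc denom |x| ^ (-α) ≤ (2 / 3 * denom a) ^ (-α) :=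
          rpow_le_rpow_of_nonpos (by positivity) hlow (by linarith)
      _ = (2 / 3 : ℝ) ^ (-α) * denom a ^ (-α) := mul_rpow (by norm_num) hMa.le
      _ ≤ 4 / (1 - α) * denom a ^ (-α) := by gcongr

theorem exists_level_of_near {c h α : ℝ} (hα0 : 0 ≤ α) (hα1 : α < 1) (hh : 0 < h)
    (hI : Icc c (c + h) ⊆ Icc (-(2 * h)) (2 * h)) :
    ∃ M > 0, (∀ x ∈ Icc c (c + h), denom |x| ≤ 2 * M) ∧
      avgI (Icc c (c + h)) (fun x => denom |x| ^ (-α)) ≤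
        ENNReal.ofReal (4 / (1 - α) * M ^ (-α)) := by
  have hM := denom_pos (by linarith : 0 < 2 * h)
  refine ⟨denom (2 * h), hM, fun x hx => ?_,
    avgI_le_of_lintegral_le ⟨c, h, hh, rfl⟩ ?_⟩
  · rcases eq_or_ne x 0 with rfl | hx0
    · rw [abs_zero, denom_zero]
      positivity
    · linarith [denom_le_of_le (abs_pos.mpr hx0) (abs_le.mpr (hI hx))]
  calc ∫⁻ x in Icc c (c + h), ENNReal.ofReal (denom |x| ^ (-α))
      ≤ ∫⁻ x in Icc (-(2 * h)) (2 * h), ENNReal.ofReal (denom |x| ^ (-α)) :=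
        lintegral_mono_set hI
    _ ≤ 2 * ∫⁻ t in Ioc 0 (2 * h), ENNReal.ofReal (denom t ^ (-α)) :=
        lintegral_Icc_comp_abs_le (fun t => ENNReal.ofReal (denom t ^ (-α))) _
    _ ≤ 2 * ENNReal.ofReal (2 * h * denom (2 * h) ^ (-α) / (1 - α)) := by
        gcongr
        exact lintegral_Ioc_rpow_neg_le_of_div_le hα0 hα1 (by linarith) hM
          fun t ht => denom_div_le_denom_div ht.1 ht.2
    _ = ENNReal.ofReal (4 / (1 - α) * denom (2 * h) ^ (-α)) * volume (Icc c (c + h)) := by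
        have : 0 < 1 - α := by linarith
        rw [Real.volume_Icc, add_sub_cancel_left, ← ENNReal.ofReal_ofNat 2,
          ← ENNReal.ofReal_mul (by norm_num), ← ENNReal.ofReal_mul (by positivity)]
        congr 1
        field_simp
        ring

theorem exists_level {I : Set ℝ} {α : ℝ} (hα0 : 0 ≤ α) (hα1 : α < 1) (hI : IsIntervalR I) :
    ∃ M > 0, (∀ x ∈ I, denom |x| ≤ 2 * M) ∧
      avgI I (fun x => denom |x| ^ (-α)) ≤ ENNReal.ofReal (4 / (1 - α) * M ^ (-α)) := by
  obtain ⟨c, h, hh, rfl⟩ := hI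
  by_cases hright : h ≤ c
  · refine exists_level_of_far hα0 hα1 ⟨c, h, hh, rfl⟩ (hh.trans_le hright) fun x hx => ?_
    rw [abs_of_pos (by linarith [hx.1])]
    constructor <;> linarith [hx.1, hx.2]
  by_cases hleft : c + h ≤ -h
  · refine exists_level_of_far (a := -(c + h)) hα0 hα1 ⟨c, h, hh, rfl⟩ (by linarith)
      fun x hx => ?_
    rw [abs_of_neg (by linarith [hx.2])]
    constructor <;> linarith [hx.1, hx.2]
  exact exists_level_of_near hα0 hα1 hh fun x hx => ⟨by linarith [hx.1], by linarith [hx.2]⟩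

end LogWeight

/-- With `w₁(x) = 1/(|x| (log(e/|x|))²)` on `[-1,1]` and `1` elsewhere, the weight
`σ₁ = w₁^{1-p₁'}` belongs to `A_{2p₁'}`, where `p₁' = p₁/(p₁-1)`. -/
theorem dual_weight_in_A_two_p1prime (p₁ : ℝ) (hp₁ : 1 < p₁)
    (w₁ : ℝ → ℝ)
    (hw₁ : ∀ x, w₁ x = if |x| ≤ 1 then
      1 / (|x| * Real.log (Real.exp 1 / |x|) ^ (2 : ℕ)) else 1) :
    MuckApI (2 * (p₁ / (p₁ - 1)))
      (fun x => w₁ x ^ (1 - p₁ / (p₁ - 1))) := by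
  set q := p₁ / (p₁ - 1)
  have hq : 1 < q := by rw [lt_div_iff₀ (by linarith)]; linarith
  set α := (q - 1) / (2 * q - 1) with hα_def
  have hα : 0 < α := div_pos (by linarith) (by linarith)
  have hα1 : α < 1 := by rw [div_lt_one (by linarith)]; linarith
  have hσ : (fun x => w₁ x ^ (1 - q)) = fun x => LogWeight.denom |x| ^ (q - 1) := by
    funext x
    -- also at `x = 0`, where both sides vanish since `0⁻¹ = 0`
    have hd := LogWeight.denom_nonneg (abs_nonneg x)
    rw [hw₁, ← LogWeight.inv_denom, inv_rpow hd, ← rpow_neg hd, neg_sub]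
  have hP : 2 * q = 1 + (q - 1) / α := by
    have : q - 1 ≠ 0 := by linarith
    rw [hα_def, div_div_eq_mul_div, mul_div_cancel_left₀ _ this]
    ring
  rw [hσ, hP]
  exact muckApI_rpow_of_exists_level (fun x => LogWeight.denom_nonneg (abs_nonneg x)) hα
    (by linarith) zero_le_two (by positivity) fun I hI => LogWeight.exists_level hα.le hα1 hI
end
end
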